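/- arXiv:1006.3223 — 2 statements merged into one kernel-verified Lean document; each statement's English description precedes it below -/
import Mathlib

section
/- Let P be a pseudo Sasaki algebra. Define the partial binary operation ⊕ on P by: a⊕b is defined iff a ≤ b⁻ (equivalently b ≤ a~), and then a⊕b := (a~∘b~)⁻ = (b⁻∗a⁻)~. Then (P; ⊕, 0, 1) is a pseudo-effect algebra (axioms PE1–PE4 hold), the order induced by ⊕ coincides with the order of P, and this pseudo-effect algebra is lattice ordered. -/
/-- A pseudo Sasaki algebra: a bounded poset with two negations `lneg` (⁻), `rneg` (~)
and two conjunctions `circ` (∘), `cstar` (∗) satisfying pseudo-involution, unity,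
self-adjointness, divisibility, partial associativity and the compatibility of the two
descriptions of the partial sum. -/
class PseudoSasaki (P : Type*) extends PartialOrder P, BoundedOrder P where
  lneg : P → P
  rneg : P → P
  circ : P → P → P
  cstar : P → P → P
  rneg_lneg : ∀ a : P, rneg (lneg a) = a
  lneg_rneg : ∀ a : P, lneg (rneg a) = a
  lneg_anti : ∀ a b : P, a ≤ b → lneg b ≤ lneg a
  rneg_anti : ∀ a b : P, a ≤ b → rneg b ≤ rneg a
  circ_one : ∀ a : P, circ a ⊤ = a
  one_circ : ∀ a : P, circ ⊤ a = a
  one_cstar : ∀ a : P, cstar ⊤ a = a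
  cstar_one : ∀ a : P, cstar a ⊤ = a
  sa_circ : ∀ a b c : P, circ a b ≤ c ↔ cstar a (lneg c) ≤ lneg b
  sa_cstar : ∀ a b c : P, cstar a b ≤ c ↔ circ a (rneg c) ≤ rneg b
  divisibility : ∀ a b c : P, c ≤ a → c ≤ b →
    c ≤ circ a (rneg (cstar a (lneg b))) ∧
      circ a (rneg (cstar a (lneg b))) = cstar a (lneg (circ a (rneg b)))
  passoc_circ : ∀ a b c : P, a ≤ lneg b → c ≤ circ (rneg a) (rneg b) →
    circ (circ (rneg a) (rneg b)) (rneg c) = circ (rneg a) (circ (rneg b) (rneg c))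
  passoc_cstar : ∀ a b c : P, b ≤ rneg a → c ≤ cstar (lneg b) (lneg a) →
    cstar (lneg c) (cstar (lneg b) (lneg a)) = cstar (cstar (lneg c) (lneg b)) (lneg a)
  sum_compat : ∀ a b : P, a ≤ lneg b →
    lneg (circ (rneg a) (rneg b)) = rneg (cstar (lneg b) (lneg a))

open PseudoSasaki

/-- a⊕b is defined iff a ≤ b⁻. -/
def PseudoSasaki.pdef {P : Type*} [PseudoSasaki P] (a b : P) : Prop := a ≤ lneg b

/-- a⊕b := (a~∘b~)⁻. -/
def PseudoSasaki.psum {P : Type*} [PseudoSasaki P] (a b : P) : P :=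
  lneg (circ (rneg a) (rneg b))

section PseudoSasakiLemmas

open PseudoSasaki

variable {P : Type*} [PseudoSasaki P]

private lemma g_mp {a b : P} (h : a ≤ lneg b) : b ≤ rneg a := by
  have := rneg_anti a (lneg b) h
  rwa [rneg_lneg] at this

private lemma g_mpr {a b : P} (h : b ≤ rneg a) : a ≤ lneg b := by
  have := lneg_anti b (rneg a) h
  rwa [lneg_rneg] at this

private lemma lneg_top' : (lneg (⊤ : P)) = ⊥ := by
  have := lneg_anti (rneg (⊥ : P)) ⊤ le_top
  rw [lneg_rneg] at this
  exact le_bot_iff.mp this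

private lemma rneg_top' : (rneg (⊤ : P)) = ⊥ := by
  have := rneg_anti (lneg (⊥ : P)) ⊤ le_top
  rw [rneg_lneg] at this
  exact le_bot_iff.mp this

private lemma lneg_bot' : (lneg (⊥ : P)) = ⊤ := by
  rw [← rneg_top']; exact lneg_rneg ⊤

private lemma rneg_bot' : (rneg (⊥ : P)) = ⊤ := by
  rw [← lneg_top']; exact rneg_lneg ⊤

private lemma circ_mono (a : P) {b b' : P} (h : b ≤ b') : circ a b ≤ circ a b' := by
  rw [sa_circ]
  exact le_trans ((sa_circ a b' (circ a b')).mp le_rfl) (lneg_anti b b' h)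

private lemma cstar_mono (a : P) {b b' : P} (h : b ≤ b') : cstar a b ≤ cstar a b' := by
  rw [sa_cstar]
  exact le_trans ((sa_cstar a b' (cstar a b')).mp le_rfl) (rneg_anti b b' h)

private lemma circ_le (a b : P) : circ a b ≤ a := by
  have := circ_mono a (le_top : b ≤ ⊤)
  rwa [circ_one] at this

private lemma cstar_le (a b : P) : cstar a b ≤ a := by
  have := cstar_mono a (le_top : b ≤ ⊤)
  rwa [cstar_one] at this

private lemma circ_bot_iff {a z : P} : circ a z = ⊥ ↔ a ≤ lneg z := by
  rw [← le_bot_iff, sa_circ, lneg_bot', cstar_one]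

private lemma cstar_bot_iff {a z : P} : cstar a z = ⊥ ↔ a ≤ rneg z := by
  rw [← le_bot_iff, sa_cstar, rneg_bot', circ_one]

private lemma circ_rneg_self (a : P) : circ a (rneg a) = ⊥ := by
  rw [circ_bot_iff, lneg_rneg]

private lemma cstar_lneg_self (a : P) : cstar a (lneg a) = ⊥ := by
  rw [cstar_bot_iff, rneg_lneg]

private lemma divlb {A B c : P} (h1 : c ≤ A) (h2 : c ≤ B) :
    c ≤ circ A (rneg (cstar A (lneg B))) := (divisibility A B c h1 h2).1

private lemma div_eq (A B : P) :
    circ A (rneg (cstar A (lneg B))) = cstar A (lneg (circ A (rneg B))) :=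
  (divisibility A B ⊥ bot_le bot_le).2

private lemma e1 {A y : P} (h : y ≤ A) : circ A (rneg (cstar A (lneg y))) = y := by
  refine le_antisymm ?_ (divlb h le_rfl)
  refine (sa_circ _ _ _).mpr ?_
  exact le_of_eq (lneg_rneg _).symm

private lemma e2 {A y : P} (h : y ≤ A) : cstar A (lneg (circ A (rneg y))) = y := by
  rw [← div_eq, e1 h]

private lemma sc {a b : P} (h : pdef a b) : psum a b = rneg (cstar (lneg b) (lneg a)) :=
  sum_compat a b h

private lemma lsum {a b : P} (h : pdef a b) : lneg (psum a b) = cstar (lneg b) (lneg a) := by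
  rw [sc h, lneg_rneg]

private lemma rsum (a b : P) : rneg (psum a b) = circ (rneg a) (rneg b) := rneg_lneg _

private lemma le_psum_left (a b : P) : a ≤ psum a b := g_mpr (circ_le (rneg a) (rneg b))

private lemma le_psum_right {a b : P} (h : pdef a b) : b ≤ psum a b := by
  rw [sc h]; exact g_mp (cstar_le _ _)

private lemma c2sum {y S : P} (h : y ≤ S) : psum (circ (lneg y) S) y = S := by
  have hp : pdef (circ (lneg y) S) y := circ_le _ _
  rw [sc hp]
  have h2 : cstar (lneg y) (lneg (circ (lneg y) S)) = lneg S := by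
    have := e2 (A := lneg y) (y := lneg S) (lneg_anti y S h)
    rwa [rneg_lneg] at this
  rw [h2, rneg_lneg]

private lemma c1def (x S : P) : pdef x (cstar (rneg x) S) := g_mpr (cstar_le _ _)

private lemma c1sum {x S : P} (h : x ≤ S) : psum x (cstar (rneg x) S) = S := by
  show lneg (circ (rneg x) (rneg (cstar (rneg x) S))) = S
  have h1 := e1 (A := rneg x) (y := rneg S) (rneg_anti x S h)
  rw [lneg_rneg] at h1
  rw [h1, lneg_rneg]

private lemma lsub {a b : P} (h : pdef a b) : cstar (rneg a) (psum a b) = b :=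
  e2 (A := rneg a) (y := b) (g_mp h)

private lemma lsub' {a b : P} (h : pdef a b) : circ (lneg b) (psum a b) = a := by
  have h1 := e1 (A := lneg b) (y := a) h
  rwa [← sc h] at h1

private lemma k3 {b c : P} (h : pdef b c) :
    circ (lneg b) (lneg c) = cstar (lneg c) (lneg b) := by
  have hbRc : b ≤ lneg c := h
  -- step 1: first passoc_circ instance
  have cond1 : lneg (lneg b) ≤ lneg (lneg (lneg c)) :=
    lneg_anti _ _ (lneg_anti _ _ hbRc)
  have cond2 : circ (lneg b) (lneg c) ≤
      circ (rneg (lneg (lneg b))) (rneg (lneg (lneg c))) := by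
    rw [rneg_lneg, rneg_lneg]
  have hpc := passoc_circ (lneg (lneg b)) (lneg (lneg c)) (circ (lneg b) (lneg c)) cond1 cond2
  rw [rneg_lneg, rneg_lneg, circ_rneg_self] at hpc
  -- hpc : ⊥ = circ (lneg b) (circ (lneg c) (rneg (circ (lneg b) (lneg c))))
  have h3 : lneg b ≤ lneg (circ (lneg c) (rneg (circ (lneg b) (lneg c)))) :=
    circ_bot_iff.mp hpc.symm
  have h4 : circ (lneg c) (rneg (circ (lneg b) (lneg c))) ≤ b := by
    have := rneg_anti _ _ h3
    rwa [rneg_lneg, rneg_lneg] at this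
  have half1 : cstar (lneg c) (lneg b) ≤ circ (lneg b) (lneg c) := by
    have := (sa_circ (lneg c) (rneg (circ (lneg b) (lneg c))) b).mp h4
    rwa [lneg_rneg] at this
  -- step 2: the other inequality
  have hWb : pdef (lneg (psum b c)) b := lneg_anti _ _ (le_psum_left b c)
  have hρb : pdef (circ (lneg b) (lneg c)) b := circ_le _ _
  have h5 : lneg (psum b c) ≤ circ (lneg b) (lneg c) := by
    rw [lsum h]; exact half1
  have hmono : psum (lneg (psum b c)) b ≤ psum (circ (lneg b) (lneg c)) b := by
    rw [sc hWb, sc hρb]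
    exact rneg_anti _ _ (cstar_mono _ (lneg_anti _ _ h5))
  have hVc : psum (lneg (psum b c)) b ≤ lneg c := by
    have h6 := c2sum (y := b) (S := lneg c) hbRc
    rw [← h6]; exact hmono
  have h7 : c ≤ rneg (psum (lneg (psum b c)) b) := g_mp hVc
  rw [rsum, rneg_lneg] at h7
  -- h7 : c ≤ circ (psum b c) (rneg b)
  have hpc2 := passoc_circ (lneg (psum b c)) b c hWb (by rw [rneg_lneg]; exact h7)
  rw [rneg_lneg, ← rsum b c, circ_rneg_self] at hpc2
  -- hpc2 : circ (circ (psum b c) (rneg b)) (rneg c) = ⊥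
  have h8 : circ (psum b c) (rneg b) ≤ lneg (rneg c) := circ_bot_iff.mp hpc2
  rw [lneg_rneg] at h8
  -- step 9
  have h9 : lneg c ≤ psum (lneg (psum b c)) b := by
    have hv : psum (lneg (psum b c)) b = lneg (circ (psum b c) (rneg b)) := by
      show lneg (circ (rneg (lneg (psum b c))) (rneg b)) = _
      rw [rneg_lneg]
    rw [hv]
    exact lneg_anti _ _ h8
  -- step 10
  have h10 : circ (lneg b) (lneg c) ≤ cstar (lneg c) (lneg b) := by
    rw [← lsum h, sa_circ]
    have hlv : cstar (lneg b) (lneg (lneg (psum b c))) = lneg (psum (lneg (psum b c)) b) :=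
      (lsum hWb).symm
    rw [hlv]
    exact lneg_anti _ _ h9
  exact le_antisymm h10 half1

private lemma mix {A B : P} (h : rneg A ≤ B) : circ A B = cstar B A := by
  have hp : pdef (rneg A) (rneg B) := by
    show rneg A ≤ lneg (rneg B)
    rw [lneg_rneg]; exact h
  have := k3 hp
  rwa [lneg_rneg, lneg_rneg] at this

end PseudoSasakiLemmas

/-- Theorem 3.8: a pseudo Sasaki algebra with the partial operation ⊕ is a lattice
ordered pseudo-effect algebra, whose induced order coincides with the original order. -/
theorem pseudoSasaki_to_LPEA {P : Type*} [PseudoSasaki P] :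
    -- a⊕b is defined iff a ≤ b⁻ iff b ≤ a~, and then a⊕b = (a~∘b~)⁻ = (b⁻∗a⁻)~
    (∀ a b : P, (pdef a b ↔ b ≤ rneg a) ∧
      (pdef a b → psum a b = rneg (cstar (lneg b) (lneg a)))) ∧
    -- (PE1)
    (∀ a b c : P,
      ((pdef a b ∧ pdef (psum a b) c) ↔ (pdef b c ∧ pdef a (psum b c))) ∧
      (pdef a b → pdef (psum a b) c → psum (psum a b) c = psum a (psum b c))) ∧
    -- (PE2)
    (∀ a : P, (∃! d : P, pdef a d ∧ psum a d = ⊤) ∧ (∃! e : P, pdef e a ∧ psum e a = ⊤)) ∧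
    -- (PE3)
    (∀ a b : P, pdef a b → ∃ d e : P, pdef d a ∧ pdef b e ∧
      psum a b = psum d a ∧ psum a b = psum b e) ∧
    -- (PE4)
    (∀ a : P, (pdef a ⊤ → a = ⊥) ∧ (pdef ⊤ a → a = ⊥)) ∧
    -- the induced order coincides with the order of P
    (∀ a b : P, a ≤ b ↔ ∃ c : P, pdef c a ∧ psum c a = b) ∧
    -- the pseudo-effect algebra is lattice ordered
    (∀ a b : P, (∃ m : P, IsGLB {a, b} m) ∧ (∃ s : P, IsLUB {a, b} s)) := by
  refine ⟨?_, ?_, ?_, ?_, ?_, ?_, ?_⟩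
  · -- definedness and the two expressions for the sum
    intro a b
    exact ⟨⟨g_mp, g_mpr⟩, fun h => sc h⟩
  · -- PE1
    intro a b c
    constructor
    · constructor
      · rintro ⟨hab, habc⟩
        have hbc : pdef b c := le_trans (le_psum_right hab) habc
        refine ⟨hbc, ?_⟩
        show a ≤ lneg (psum b c)
        calc a = circ (lneg b) (psum a b) := (lsub' hab).symm
          _ ≤ circ (lneg b) (lneg c) := circ_mono _ habc
          _ = cstar (lneg c) (lneg b) := k3 hbc
          _ = lneg (psum b c) := (lsum hbc).symm
      · rintro ⟨hbc, habc⟩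
        have hab : pdef a b := le_trans habc (lneg_anti _ _ (le_psum_left b c))
        refine ⟨hab, ?_⟩
        have h2 : psum b c ≤ rneg a := g_mp habc
        have h3 : c ≤ cstar (rneg b) (rneg a) :=
          (lsub hbc).symm.trans_le (cstar_mono _ h2)
        have hx : rneg (rneg a) ≤ rneg b := rneg_anti _ _ (g_mp hab)
        have h5 : c ≤ rneg (psum a b) := by
          rw [rsum, mix hx]; exact h3
        exact g_mpr h5
    · intro hab habc
      have cond2 : c ≤ circ (rneg a) (rneg b) := by
        rw [← rsum]; exact g_mp habc
      have hpa := passoc_circ a b c hab cond2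
      show lneg (circ (rneg (psum a b)) (rneg c)) = lneg (circ (rneg a) (rneg (psum b c)))
      rw [rsum, rsum, hpa]
  · -- PE2
    intro a
    constructor
    · refine ⟨rneg a, ⟨?_, ?_⟩, ?_⟩
      · show a ≤ lneg (rneg a); rw [lneg_rneg]
      · have hp : pdef a (rneg a) := by
          show a ≤ lneg (rneg a); rw [lneg_rneg]
        rw [sc hp, lneg_rneg, cstar_lneg_self, rneg_bot']
      · rintro d ⟨h1, h2⟩
        have h3 : circ (rneg a) (rneg d) = ⊥ := by
          have := congrArg rneg h2
          rwa [rsum, rneg_top'] at this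
        have h4 : rneg a ≤ d := by
          have := circ_bot_iff.mp h3
          rwa [lneg_rneg] at this
        exact le_antisymm (g_mp h1) h4
    · refine ⟨lneg a, ⟨le_rfl, ?_⟩, ?_⟩
      · show lneg (circ (rneg (lneg a)) (rneg a)) = ⊤
        rw [rneg_lneg, circ_rneg_self, lneg_bot']
      · rintro e ⟨h1, h2⟩
        have h3 : circ (rneg e) (rneg a) = ⊥ := by
          have := congrArg rneg h2
          rwa [rsum, rneg_top'] at this
        have h4 : rneg e ≤ a := by
          have := circ_bot_iff.mp h3
          rwa [lneg_rneg] at this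
        have h5 : lneg a ≤ e := by
          have := lneg_anti _ _ h4
          rwa [lneg_rneg] at this
        exact le_antisymm h1 h5
  · -- PE3
    intro a b hab
    refine ⟨circ (lneg a) (psum a b), cstar (rneg b) (psum a b), circ_le _ _,
      c1def b _, (c2sum (le_psum_left a b)).symm, (c1sum (le_psum_right hab)).symm⟩
  · -- PE4
    intro a
    constructor
    · intro h
      have h' : a ≤ lneg (⊤ : P) := h
      rw [lneg_top'] at h'
      exact le_bot_iff.mp h'
    · intro h
      have h1 : lneg a = ⊤ := top_le_iff.mp h
      have h2 : a = rneg (lneg a) := (rneg_lneg a).symm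
      rw [h2, h1, rneg_top']
  · -- induced order
    intro a b
    constructor
    · intro h
      exact ⟨circ (lneg a) b, circ_le _ _, c2sum h⟩
    · rintro ⟨c, hd, rfl⟩
      exact le_psum_right hd
  · -- lattice order
    intro a b
    constructor
    · refine ⟨circ a (rneg (cstar a (lneg b))), ?_, ?_⟩
      · rintro x (rfl | rfl)
        · exact circ_le _ _
        · exact (sa_circ _ _ _).mpr (le_of_eq (lneg_rneg _).symm)
      · intro c hc
        exact divlb (hc (Set.mem_insert _ _)) (hc (Set.mem_insert_iff.mpr (Or.inr rfl)))
    · refine ⟨rneg (circ (lneg a) (rneg (cstar (lneg a) (lneg (lneg b))))), ?_, ?_⟩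
      · rintro x (rfl | rfl)
        · exact g_mp (circ_le _ _)
        · exact g_mp ((sa_circ _ _ _).mpr (le_of_eq (lneg_rneg _).symm))
      · intro u hu
        have h1 : lneg u ≤ circ (lneg a) (rneg (cstar (lneg a) (lneg (lneg b)))) :=
          divlb (lneg_anti _ _ (hu (Set.mem_insert _ _)))
            (lneg_anti _ _ (hu (Set.mem_insert_iff.mpr (Or.inr rfl))))
        have := rneg_anti _ _ h1
        rwa [rneg_lneg] at this
end

section
/- Let (P; ⊕, 0, 1) be a lattice-ordered pseudo-effect algebra with Sasaki operations a∘b := (a∧b⁻)∕a and a∗b := a∖(a∧b~). Then for all a, b, c: b ≤ c implies a∘b ≤ a∘c and a∗b ≤ a∗c. -/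
/-- A pseudo-effect algebra: a set with a partial binary operation ⊕ (encoded by a
definedness predicate `defd` and a total function `padd`) and constants `zero`, `one`,
satisfying axioms (PE1)-(PE4). -/
class PseudoEffectAlgebra (P : Type*) where
  defd : P → P → Prop
  padd : P → P → P
  zero : P
  one : P
  pe1_defined : ∀ a b c : P,
    (defd a b ∧ defd (padd a b) c) ↔ (defd b c ∧ defd a (padd b c))
  pe1_assoc : ∀ a b c : P, defd a b → defd (padd a b) c →
    padd (padd a b) c = padd a (padd b c)
  pe2_right : ∀ a : P, ∃! d : P, defd a d ∧ padd a d = one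
  pe2_left : ∀ a : P, ∃! e : P, defd e a ∧ padd e a = one
  pe3 : ∀ a b : P, defd a b → ∃ d e : P, defd d a ∧ defd b e ∧
    padd a b = padd d a ∧ padd a b = padd b e
  pe4_right : ∀ a : P, defd a one → a = zero
  pe4_left : ∀ a : P, defd one a → a = zero

namespace PseudoEffectAlgebra

variable {P : Type*} [PseudoEffectAlgebra P]

/-- The order induced by ⊕: a ≤ b iff c⊕a = b for some c. -/
def ple (a b : P) : Prop := ∃ c : P, defd c a ∧ padd c a = b

/-- The "left" subtraction: b∖a is the element x with x⊕a = b (defined iff a ≤ b). -/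
noncomputable def rsub (b a : P) : P :=
  @Classical.epsilon P ⟨zero⟩ (fun x => defd x a ∧ padd x a = b)

/-- The "right" subtraction: a∕b is the element y with a⊕y = b (defined iff a ≤ b). -/
noncomputable def ldiv (a b : P) : P :=
  @Classical.epsilon P ⟨zero⟩ (fun y => defd a y ∧ padd a y = b)

/-- The left complement a⁻ := 1∖a. -/
noncomputable def lcompl (a : P) : P := rsub one a

/-- The right complement a~ := a∕1. -/
noncomputable def rcompl (a : P) : P := ldiv a one

end PseudoEffectAlgebra

open PseudoEffectAlgebra

/-- A lattice pseudo-effect algebra: a pseudo-effect algebra whose induced order is a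
lattice. -/
class LatticePseudoEffectAlgebra (P : Type*) extends Lattice P, PseudoEffectAlgebra P where
  le_iff : ∀ a b : P, a ≤ b ↔ ∃ c : P, defd c a ∧ padd c a = b

namespace LatticePseudoEffectAlgebra

variable {P : Type*} [LatticePseudoEffectAlgebra P]

/-- The "right" Sasaki product a∘b := (a∧b⁻)∕a. -/
noncomputable def scirc (a b : P) : P := ldiv (a ⊓ lcompl b) a

/-- The "left" Sasaki product a∗b := a∖(a∧b~). -/
noncomputable def scstar (a b : P) : P := rsub a (a ⊓ rcompl b)

end LatticePseudoEffectAlgebra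

open LatticePseudoEffectAlgebra


namespace PseudoEffectAlgebra

variable {P : Type*} [PseudoEffectAlgebra P]

lemma assocR {a b c : P} (h1 : defd a b) (h2 : defd (padd a b) c) :
    defd b c ∧ defd a (padd b c) ∧ padd a (padd b c) = padd (padd a b) c := by
  have h := (pe1_defined a b c).mp ⟨h1, h2⟩
  exact ⟨h.1, h.2, (pe1_assoc a b c h1 h2).symm⟩

lemma assocL {a b c : P} (h1 : defd b c) (h2 : defd a (padd b c)) :
    defd a b ∧ defd (padd a b) c ∧ padd (padd a b) c = padd a (padd b c) := by
  have h := (pe1_defined a b c).mpr ⟨h1, h2⟩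
  exact ⟨h.1, h.2, pe1_assoc a b c h.1 h.2⟩

lemma cancel_left {a b c : P} (hab : defd a b) (hac : defd a c)
    (h : padd a b = padd a c) : b = c := by
  obtain ⟨z, ⟨hz, hz1⟩, -⟩ := pe2_right (padd a b)
  obtain ⟨hbz, habz, he⟩ := assocR hab hz
  have hb1 : padd a (padd b z) = one := by rw [he]; exact hz1
  have hz' : defd (padd a c) z := by rw [← h]; exact hz
  obtain ⟨hcz, hacz, he'⟩ := assocR hac hz'
  have hc1 : padd a (padd c z) = one := by rw [he', ← h]; exact hz1
  have hw : padd b z = padd c z := (pe2_right a).unique ⟨habz, hb1⟩ ⟨hacz, hc1⟩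
  obtain ⟨u, ⟨hu, hu1⟩, -⟩ := pe2_right (padd b z)
  obtain ⟨hzu, hbzu, he2⟩ := assocR hbz hu
  have hb2 : padd b (padd z u) = one := by rw [he2]; exact hu1
  have hu' : defd (padd c z) u := by rw [← hw]; exact hu
  obtain ⟨hzu', hczu, he3⟩ := assocR hcz hu'
  have hc2 : padd c (padd z u) = one := by rw [he3, ← hw]; exact hu1
  exact (pe2_left (padd z u)).unique ⟨hbzu, hb2⟩ ⟨hczu, hc2⟩

lemma cancel_right {a b c : P} (hba : defd b a) (hca : defd c a)
    (h : padd b a = padd c a) : b = c := by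
  obtain ⟨z, ⟨hz, hz1⟩, -⟩ := pe2_left (padd b a)
  obtain ⟨hzb, hzba, he⟩ := assocL hba hz
  have hb1 : padd (padd z b) a = one := by rw [he]; exact hz1
  have hz' : defd z (padd c a) := by rw [← h]; exact hz
  obtain ⟨hzc, hzca, he'⟩ := assocL hca hz'
  have hc1 : padd (padd z c) a = one := by rw [he', ← h]; exact hz1
  have hw : padd z b = padd z c := (pe2_left a).unique ⟨hzba, hb1⟩ ⟨hzca, hc1⟩
  obtain ⟨u, ⟨hu, hu1⟩, -⟩ := pe2_left (padd z b)
  obtain ⟨huz, huzb, he2⟩ := assocL hzb hu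
  have hb2 : padd (padd u z) b = one := by rw [he2]; exact hu1
  have hu' : defd u (padd z c) := by rw [← hw]; exact hu
  obtain ⟨huz', huzc, he3⟩ := assocL hzc hu'
  have hc2 : padd (padd u z) c = one := by rw [he3, ← hw]; exact hu1
  exact (pe2_right (padd u z)).unique ⟨huzb, hb2⟩ ⟨huzc, hc2⟩

lemma ple_iff_right {a b : P} : ple a b ↔ ∃ d : P, defd a d ∧ padd a d = b := by
  constructor
  · rintro ⟨c, hc, rfl⟩
    obtain ⟨d, e, _, hae, _, h2⟩ := pe3 c a hc
    exact ⟨e, hae, h2.symm⟩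
  · rintro ⟨d, hd, rfl⟩
    obtain ⟨d', e, hd', _, h1, _⟩ := pe3 a d hd
    exact ⟨d', hd', h1.symm⟩

lemma ldiv_spec {a b : P} (h : ple a b) :
    defd a (ldiv a b) ∧ padd a (ldiv a b) = b := by
  obtain ⟨d, hd⟩ := ple_iff_right.mp h
  exact Classical.epsilon_spec (p := fun y => defd a y ∧ padd a y = b) ⟨d, hd⟩

lemma rsub_spec {a b : P} (h : ple a b) :
    defd (rsub b a) a ∧ padd (rsub b a) a = b := by
  obtain ⟨c, hc⟩ := h
  exact Classical.epsilon_spec (p := fun x => defd x a ∧ padd x a = b) ⟨c, hc⟩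

lemma ple_one (a : P) : ple a one := by
  obtain ⟨e, ⟨he, he1⟩, -⟩ := pe2_left a
  exact ⟨e, he, he1⟩

lemma lcompl_spec (a : P) : defd (lcompl a) a ∧ padd (lcompl a) a = one :=
  rsub_spec (ple_one a)

lemma rcompl_spec (a : P) : defd a (rcompl a) ∧ padd a (rcompl a) = one :=
  ldiv_spec (ple_one a)

lemma lcompl_antitone {b c : P} (h : ple b c) : ple (lcompl c) (lcompl b) := by
  obtain ⟨e, heb, hebc⟩ := h
  obtain ⟨hcc, hc1⟩ := lcompl_spec c
  have hcd : defd (lcompl c) (padd e b) := by rw [hebc]; exact hcc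
  obtain ⟨h1, h2, h3⟩ := assocL heb hcd
  have hone : padd (padd (lcompl c) e) b = one := by rw [h3, hebc]; exact hc1
  obtain ⟨hbb, hb1⟩ := lcompl_spec b
  have : padd (lcompl c) e = lcompl b :=
    (pe2_left b).unique ⟨h2, hone⟩ ⟨hbb, hb1⟩
  exact ple_iff_right.mpr ⟨e, h1, this⟩

lemma rcompl_antitone {b c : P} (h : ple b c) : ple (rcompl c) (rcompl b) := by
  obtain ⟨d, hbd, hbdc⟩ := ple_iff_right.mp h
  obtain ⟨hcc, hc1⟩ := rcompl_spec c
  have hcd : defd (padd b d) (rcompl c) := by rw [hbdc]; exact hcc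
  obtain ⟨h1, h2, h3⟩ := assocR hbd hcd
  have hone : padd b (padd d (rcompl c)) = one := by rw [h3, hbdc]; exact hc1
  obtain ⟨hbb, hb1⟩ := rcompl_spec b
  have : padd d (rcompl c) = rcompl b :=
    (pe2_right b).unique ⟨h2, hone⟩ ⟨hbb, hb1⟩
  exact ⟨d, h1, this⟩

lemma ldiv_antitone {x y a : P} (hxy : ple x y) (hya : ple y a) :
    ple (ldiv y a) (ldiv x a) := by
  obtain ⟨s, hxs, hxsy⟩ := ple_iff_right.mp hxy
  obtain ⟨hyv, hyva⟩ := ldiv_spec hya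
  have hd : defd (padd x s) (ldiv y a) := by rw [hxsy]; exact hyv
  obtain ⟨h1, h2, h3⟩ := assocR hxs hd
  have hxa : ple x a :=
    ple_iff_right.mpr ⟨padd s (ldiv y a), h2, by rw [h3, hxsy]; exact hyva⟩
  obtain ⟨hxu, hxua⟩ := ldiv_spec hxa
  have : padd s (ldiv y a) = ldiv x a :=
    cancel_left h2 hxu (by rw [h3, hxsy, hyva, hxua])
  exact ⟨s, h1, this⟩

lemma rsub_antitone {x y a : P} (hxy : ple x y) (hya : ple y a) :
    ple (rsub a y) (rsub a x) := by
  obtain ⟨s, hsx, hsxy⟩ := hxy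
  obtain ⟨hvy, hvya⟩ := rsub_spec hya
  have hd : defd (rsub a y) (padd s x) := by rw [hsxy]; exact hvy
  obtain ⟨h1, h2, h3⟩ := assocL hsx hd
  have hxa : ple x a := ⟨padd (rsub a y) s, h2, by rw [h3, hsxy]; exact hvya⟩
  obtain ⟨hux, huxa⟩ := rsub_spec hxa
  have : padd (rsub a y) s = rsub a x :=
    cancel_right h2 hux (by rw [h3, hsxy, hvya, huxa])
  exact ple_iff_right.mpr ⟨s, h1, this⟩

end PseudoEffectAlgebra

/-- Lemma 4.3: the Sasaki products are monotone in the second argument. -/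
theorem lpea_sasaki_monotone {P : Type*} [LatticePseudoEffectAlgebra P] (a b c : P)
    (h : b ≤ c) : scirc a b ≤ scirc a c ∧ scstar a b ≤ scstar a c := by
  have lip : ∀ u v : P, u ≤ v ↔ ple u v := fun u v =>
    LatticePseudoEffectAlgebra.le_iff u v
  have hbc : ple b c := (lip b c).mp h
  constructor
  · have h1 : ple (a ⊓ lcompl c) (a ⊓ lcompl b) :=
      (lip _ _).mp (inf_le_inf_left a ((lip _ _).mpr (lcompl_antitone hbc)))
    have h2 : ple (a ⊓ lcompl b) a := (lip _ _).mp inf_le_left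
    exact (lip _ _).mpr (ldiv_antitone h1 h2)
  · have h1 : ple (a ⊓ rcompl c) (a ⊓ rcompl b) :=
      (lip _ _).mp (inf_le_inf_left a ((lip _ _).mpr (rcompl_antitone hbc)))
    have h2 : ple (a ⊓ rcompl b) a := (lip _ _).mp inf_le_left
    exact (lip _ _).mpr (rsub_antitone h1 h2)
end
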